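/- arXiv:1810.01410 — 2 statements merged into one kernel-verified Lean document; each statement's English description precedes it below -/
import Mathlib

section
/- Suppose the quantity 2[α(p−1) − (p+1)]/(δ(p−1)²) is positive, set a = −2/(p−1), and let b_∞ > 0 be the positive real number with b_∞^{p−1} = 2[α(p−1) − (p+1)]/(δ(p−1)²). If the coefficients satisfy a(a−1)·a_k + a·b_k + c_k = 0 for every k ∈ {−1, 0, …, n}, then the function u_∞(x) = b_∞·x^a satisfies the perturbed Lane–Emden equation for every x ∈ (0, ∞). -/
open Real Set

/-! For `u = B x^A`, the `k`-th perturbation term `a_k x^(k+2) u'' + b_k x^(k+1) u' + c_k x^k u`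
equals `(A(A-1) a_k + A b_k + c_k) B x^(k+A)`, so the matching conditions kill the whole
perturbation. What remains is `B x^(A-2) (A(A-1) + αA + δ B^(p-1))`, because `A p = A - 2` for
`A = -2/(p-1)`, and the defining equation of `b_∞` makes the bracket vanish. -/

theorem deriv_const_mul_rpow (B A x : ℝ) :
    deriv (fun y => B * y ^ A) x = B * A * x ^ (A - 1) := by
  rw [deriv_const_mul_field, Real.deriv_rpow_const, mul_assoc]

theorem deriv_deriv_const_mul_rpow (B A x : ℝ) :
    deriv (deriv fun y => B * y ^ A) x = B * A * (A - 1) * x ^ (A - 2) := by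
  rw [funext (deriv_const_mul_rpow B A), deriv_const_mul_rpow]
  ring_nf

theorem perturbedLaneEmden_linearPart_const_mul_rpow (s : Finset ℤ) (a b c : ℤ → ℝ)
    (α B A : ℝ) {x : ℝ} (hx : x ≠ 0) :
    (1 + ∑ k ∈ s, a k * x ^ (k + 2)) * deriv (deriv fun y => B * y ^ A) x
        + (α / x + ∑ k ∈ s, b k * x ^ (k + 1)) * deriv (fun y => B * y ^ A) x
        + (∑ k ∈ s, c k * x ^ k) * (B * x ^ A)
      = B * (A * (A - 1) + α * A) * x ^ (A - 2)
        + B * x ^ A * ∑ k ∈ s, (A * (A - 1) * a k + A * b k + c k) * x ^ k := by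
  have h1 : x ^ (A - 1) = x ^ A / x := Real.rpow_sub_one hx A
  have h2 : x ^ (A - 2) = x ^ A / x ^ 2 := by
    rw [show A - 2 = A - 1 - 1 by ring, Real.rpow_sub_one hx, h1, div_div, sq]
  have hterm : ∀ k : ℤ,
      a k * x ^ (k + 2) * (B * A * (A - 1) * x ^ (A - 2))
        + b k * x ^ (k + 1) * (B * A * x ^ (A - 1)) + c k * x ^ k * (B * x ^ A)
      = B * x ^ A * ((A * (A - 1) * a k + A * b k + c k) * x ^ k) := fun k => by
    rw [zpow_add₀ hx, zpow_add₀ hx, zpow_one, zpow_two, h1, h2]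
    field_simp
  have hsum := Finset.sum_congr rfl fun k (_ : k ∈ s) => hterm k
  rw [Finset.sum_add_distrib, Finset.sum_add_distrib, ← Finset.mul_sum,
    ← Finset.sum_mul, ← Finset.sum_mul, ← Finset.sum_mul] at hsum
  rw [deriv_deriv_const_mul_rpow, deriv_const_mul_rpow, ← hsum, h1, h2]
  field_simp
  ring

theorem laneEmden_exponent_indicial {p : ℝ} (α : ℝ) (hp : p - 1 ≠ 0) :
    -2 / (p - 1) * (-2 / (p - 1) - 1) + α * (-2 / (p - 1))
      = -(2 * (α * (p - 1) - (p + 1)) / (p - 1) ^ 2) := by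
  field_simp
  ring

theorem rpow_laneEmden_exponent_pow {x : ℝ} (hx : 0 ≤ x) {p : ℕ} (hp : (p : ℝ) - 1 ≠ 0) :
    (x ^ (-2 / ((p : ℝ) - 1))) ^ p = x ^ (-2 / ((p : ℝ) - 1) - 2) := by
  rw [← Real.rpow_mul_natCast hx]
  congr 1
  field_simp
  ring

theorem perturbedLaneEmden_singular_solution_sufficient_general
    (p : ℕ) (hp : 1 < p) (α δ : ℝ) (hδ : δ ≠ 0)
    (n : ℕ) (a b c : ℤ → ℝ)
    (binf : ℝ)
    (hbinfp : binf ^ (p - 1)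
      = 2 * (α * ((p : ℝ) - 1) - ((p : ℝ) + 1)) / (δ * ((p : ℝ) - 1) ^ 2))
    (hmatch : ∀ k ∈ Finset.Icc (-1 : ℤ) (n : ℤ),
      (-2 / ((p : ℝ) - 1)) * (-2 / ((p : ℝ) - 1) - 1) * a k
        + (-2 / ((p : ℝ) - 1)) * b k + c k = 0)
    (u : ℝ → ℝ) (hu : u = fun x : ℝ => binf * x ^ (-2 / ((p : ℝ) - 1))) :
    ∀ x ∈ Ioi (0 : ℝ),
      (1 + ∑ k ∈ Finset.Icc (-1 : ℤ) (n : ℤ), a k * x ^ (k + 2)) * deriv (deriv u) x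
        + (α / x + ∑ k ∈ Finset.Icc (-1 : ℤ) (n : ℤ), b k * x ^ (k + 1)) * deriv u x
        + (∑ k ∈ Finset.Icc (-1 : ℤ) (n : ℤ), c k * x ^ k) * u x
        + δ * u x ^ p = 0 := by
  intro x hx
  have hp1 : (p : ℝ) - 1 ≠ 0 := sub_ne_zero.2 (by exact_mod_cast hp.ne')
  have hδbinf :
      δ * binf ^ (p - 1) = 2 * (α * ((p : ℝ) - 1) - ((p : ℝ) + 1)) / ((p : ℝ) - 1) ^ 2 := by
    rw [hbinfp]
    field_simp
  have hpow : u x ^ p = binf ^ (p - 1) * binf * x ^ (-2 / ((p : ℝ) - 1) - 2) := by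
    rw [hu, mul_pow, rpow_laneEmden_exponent_pow (le_of_lt hx) hp1, ← pow_succ,
      Nat.sub_add_cancel hp.le]
  subst hu
  rw [hpow, perturbedLaneEmden_linearPart_const_mul_rpow _ _ _ _ _ _ _ (ne_of_gt hx),
    Finset.sum_eq_zero fun k hk => by rw [hmatch k hk, zero_mul]]
  linear_combination (binf * x ^ (-2 / ((p : ℝ) - 1) - 2)) *
    (laneEmden_exponent_indicial α hp1 + hδbinf)

/-- If the matching conditions `a(a-1) a_k + a b_k + c_k = 0` hold for every
`k ∈ {-1, ..., n}`, then `u_∞(x) = b_∞ x^a`, `a = -2/(p-1)`, solves the perturbed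
Lane–Emden equation on all of `(0, ∞)`. -/
theorem perturbedLaneEmden_singular_solution_sufficient
    (p : ℕ) (hp : 1 < p) (α δ : ℝ) (hα : 0 < α) (hδ : δ ≠ 0)
    (n : ℕ) (a b c : ℤ → ℝ)
    (hpos : 0 < 2 * (α * ((p : ℝ) - 1) - ((p : ℝ) + 1)) / (δ * ((p : ℝ) - 1) ^ 2))
    (binf : ℝ) (hbinf : 0 < binf)
    (hbinfp : binf ^ (p - 1)
      = 2 * (α * ((p : ℝ) - 1) - ((p : ℝ) + 1)) / (δ * ((p : ℝ) - 1) ^ 2))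
    (hmatch : ∀ k ∈ Finset.Icc (-1 : ℤ) (n : ℤ),
      (-2 / ((p : ℝ) - 1)) * (-2 / ((p : ℝ) - 1) - 1) * a k
        + (-2 / ((p : ℝ) - 1)) * b k + c k = 0)
    (u : ℝ → ℝ) (hu : u = fun x : ℝ => binf * x ^ (-2 / ((p : ℝ) - 1))) :
    ∀ x ∈ Ioi (0 : ℝ),
      (1 + ∑ k ∈ Finset.Icc (-1 : ℤ) (n : ℤ), a k * x ^ (k + 2)) * deriv (deriv u) x
        + (α / x + ∑ k ∈ Finset.Icc (-1 : ℤ) (n : ℤ), b k * x ^ (k + 1)) * deriv u x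
        + (∑ k ∈ Finset.Icc (-1 : ℤ) (n : ℤ), c k * x ^ k) * u x
        + δ * u x ^ p = 0 :=
  perturbedLaneEmden_singular_solution_sufficient_general p hp α δ hδ n a b c binf hbinfp hmatch u
    hu
end

section
/- Assume the coefficients of R are such that R(x) = r is a constant (c_{−1} = 0, c_0 = r, c_k = 0 for k ≥ 1), that p is odd and δ > 0, and that P(x) > 0 and P'(x)/2 − Q(x) < 0 for all x ∈ (0, 1). If u is twice differentiable on [x₀, x₁) ⊆ (0, 1) and satisfies the perturbed Lane–Emden equation there, then the function H(x) := P(x)·u'(x)²/2 + (δ/(p+1))·u(x)^{p+1} + (r/2)·u(x)² satisfies H'(x) = (P'(x)/2 − Q(x))·u'(x)² on [x₀, x₁); in particular H is nonincreasing on [x₀, x₁), the infimum V := inf_{w ∈ ℝ} [ (δ/(p+1))·w^{p+1} + (r/2)·w² ] is finite, and P(x)·u'(x)² ≤ 2(H(x₀) − V) for all x ∈ [x₀, x₁). -/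
set_option autoImplicit false

open Real Set

/-- The Lyapunov function for the perturbed Lane–Emden equation with constant `R(x) = r`:
`H(x) = P(x) u'(x)²/2 + (δ/(p+1)) u(x)^{p+1} + (r/2) u(x)²`. -/
noncomputable def perturbedH (p : ℕ) (δ r : ℝ) (P u : ℝ → ℝ) (x : ℝ) : ℝ :=
  P x * (deriv u x) ^ 2 / 2 + δ / ((p : ℝ) + 1) * u x ^ (p + 1) + r / 2 * (u x) ^ 2

/-!
Multiplying the equation by `u'` turns it into `H' = (P'/2 - Q) u'² ≤ 0`, so `H` decreases along
the solution. Since `p + 1` is even and larger than `2`, the potential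
`δ/(p+1) w^{p+1} + r/2 w²` is bounded below, with infimum `V`, and then
`P u'²/2 = H - potential(u) ≤ H(x₀) - V`.
-/

noncomputable def laneEmdenPotential (p : ℕ) (δ r w : ℝ) : ℝ :=
  δ / ((p : ℝ) + 1) * w ^ (p + 1) + r / 2 * w ^ 2

theorem hasDerivAt_laneEmdenPotential (p : ℕ) (δ r w : ℝ) :
    HasDerivAt (laneEmdenPotential p δ r) (δ * w ^ p + r * w) w := by
  have h := (((hasDerivAt_id w).pow (p + 1)).const_mul (δ / ((p : ℝ) + 1))).add
    (((hasDerivAt_id w).pow 2).const_mul (r / 2))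
  refine h.congr_deriv ?_
  simp only [id, Nat.cast_add, Nat.cast_one, Nat.add_sub_cancel, Nat.cast_ofNat]
  field_simp
  ring

theorem perturbedH_eq (p : ℕ) (δ r : ℝ) (P u : ℝ → ℝ) :
    perturbedH p δ r P u = fun x => P x * deriv u x ^ 2 / 2 + laneEmdenPotential p δ r (u x) :=
  funext fun _ => add_assoc _ _ _

theorem hasDerivAt_energy {P u G : ℝ → ℝ} {x P' u'' Q g : ℝ}
    (hP : HasDerivAt P P' x) (hu : HasDerivAt u (deriv u x) x)
    (hu' : HasDerivAt (deriv u) u'' x) (hG : HasDerivAt G g (u x))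
    (heq : P x * u'' + Q * deriv u x + g = 0) :
    HasDerivAt (fun y => P y * deriv u y ^ 2 / 2 + G (u y))
      ((P' / 2 - Q) * deriv u x ^ 2) x := by
  refine (((hP.mul (hu'.pow 2)).div_const 2).add (hG.comp x hu)).congr_deriv ?_
  simp only [Pi.pow_apply, Nat.cast_ofNat]
  linear_combination deriv u x * heq

theorem neg_le_mul_pow_add_mul_sq {A : ℝ} (hA : 0 < A) (B : ℝ) {q : ℕ} (hq : Even q)
    (hq2 : 2 < q) (w : ℝ) : -(|B| + B ^ 2 / (4 * A)) ≤ A * w ^ q + B * w ^ 2 := by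
  obtain ⟨k, rfl⟩ := hq
  have hk : 2 ≤ k := by omega
  have hw : w ^ (k + k) = (w ^ 2) ^ k := by rw [← pow_mul, two_mul]
  rw [hw]
  set s := w ^ 2
  have hs : 0 ≤ s := sq_nonneg w
  have hB : 0 ≤ B ^ 2 / (4 * A) := by positivity
  -- for `s ≤ 1`, `B s ≥ -|B|`; for `s ≥ 1`, `s ^ k ≥ s ^ 2` and one completes the square
  rcases le_total s 1 with hs1 | hs1
  · have : -|B| ≤ B * s := by
      nlinarith [neg_abs_le B, le_abs_self B]
    nlinarith [pow_nonneg hs k]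
  · have hsk : s ^ 2 ≤ s ^ k := pow_le_pow_right₀ hs1 hk
    have hsq : 0 ≤ A * (s + B / (2 * A)) ^ 2 := by positivity
    have : A * (s + B / (2 * A)) ^ 2 = A * s ^ 2 + B * s + B ^ 2 / (4 * A) := by
      field_simp; ring
    nlinarith [abs_nonneg B]

theorem bddBelow_range_laneEmdenPotential {p : ℕ} (hp : 1 < p) (hodd : Odd p) {δ : ℝ}
    (hδ : 0 < δ) (r : ℝ) : BddBelow (range (laneEmdenPotential p δ r)) :=
  ⟨_, forall_mem_range.2 <| neg_le_mul_pow_add_mul_sq (by positivity) (r / 2) hodd.add_one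
    (by omega)⟩

theorem sum_Icc_neg_one_mul_zpow_eq {n : ℕ} {c : ℤ → ℝ} (hc1 : c (-1) = 0)
    (hck : ∀ k : ℤ, 1 ≤ k → c k = 0) (x : ℝ) :
    ∑ k ∈ Finset.Icc (-1 : ℤ) n, c k * x ^ k = c 0 := by
  rw [Finset.sum_eq_single_of_mem 0 (by simp)]
  · simp
  · intro k hk hk0
    obtain rfl | hk1 : k = -1 ∨ 1 ≤ k := by simp only [Finset.mem_Icc] at hk; omega
    · simp [hc1]
    · simp [hck k hk1]

theorem antitoneOn_of_hasDerivAt_nonpos {D : Set ℝ} (hD : Convex ℝ D) {f f' : ℝ → ℝ}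
    (hf : ∀ x ∈ D, HasDerivAt f (f' x) x) (hf'₀ : ∀ x ∈ D, f' x ≤ 0) : AntitoneOn f D :=
  antitoneOn_of_hasDerivWithinAt_nonpos hD
    (fun x hx => (hf x hx).continuousAt.continuousWithinAt)
    (fun x hx => (hf x (interior_subset hx)).hasDerivWithinAt)
    (fun x hx => hf'₀ x (interior_subset hx))

theorem perturbedLaneEmden_lyapunov_bound_general
    (p : ℕ) (hp : 1 < p) (δ r : ℝ) (hδ : 0 < δ)
    (hodd : Odd p)
    (n : ℕ) (a c : ℤ → ℝ)
    (hc1 : c (-1) = 0) (hc0 : c 0 = r) (hck : ∀ k : ℤ, 1 ≤ k → c k = 0)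
    (P Q : ℝ → ℝ)
    (hP : P = fun x : ℝ => 1 + ∑ k ∈ Finset.Icc (-1 : ℤ) (n : ℤ), a k * x ^ (k + 2))
    (hPQ : ∀ x ∈ Ioo (0 : ℝ) 1, deriv P x / 2 - Q x < 0)
    (x₀ x₁ : ℝ) (hx : Ico x₀ x₁ ⊆ Ioo (0 : ℝ) 1)
    (u : ℝ → ℝ)
    (hdiff : ∀ x ∈ Ico x₀ x₁, DifferentiableAt ℝ u x)
    (hdiff2 : ∀ x ∈ Ico x₀ x₁, DifferentiableAt ℝ (deriv u) x)
    (heq : ∀ x ∈ Ico x₀ x₁,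
      P x * deriv (deriv u) x + Q x * deriv u x
        + (∑ k ∈ Finset.Icc (-1 : ℤ) (n : ℤ), c k * x ^ k) * u x
        + δ * u x ^ p = 0) :
    (∀ x ∈ Ico x₀ x₁,
      HasDerivAt (perturbedH p δ r P u)
        ((deriv P x / 2 - Q x) * (deriv u x) ^ 2) x) ∧
    AntitoneOn (perturbedH p δ r P u) (Ico x₀ x₁) ∧
    BddBelow (Set.range fun w : ℝ => δ / ((p : ℝ) + 1) * w ^ (p + 1) + r / 2 * w ^ 2) ∧
    ∀ x ∈ Ico x₀ x₁,
      P x * (deriv u x) ^ 2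
        ≤ 2 * (perturbedH p δ r P u x₀
            - sInf (Set.range fun w : ℝ =>
                δ / ((p : ℝ) + 1) * w ^ (p + 1) + r / 2 * w ^ 2)) := by
  have hH' : ∀ x ∈ Ico x₀ x₁,
      HasDerivAt (perturbedH p δ r P u) ((deriv P x / 2 - Q x) * deriv u x ^ 2) x := by
    intro x hxI
    have hx0 : x ≠ 0 := (hx hxI).1.ne'
    have hPx : DifferentiableAt ℝ P x := by subst hP; fun_prop (disch := exact Or.inl hx0)
    rw [perturbedH_eq]
    refine hasDerivAt_energy hPx.hasDerivAt (hdiff x hxI).hasDerivAt (hdiff2 x hxI).hasDerivAt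
      (hasDerivAt_laneEmdenPotential p δ r (u x)) ?_
    rw [← heq x hxI, sum_Icc_neg_one_mul_zpow_eq hc1 hck, hc0]
    ring
  have hanti : AntitoneOn (perturbedH p δ r P u) (Ico x₀ x₁) :=
    antitoneOn_of_hasDerivAt_nonpos (convex_Ico x₀ x₁) hH' fun x hxI =>
      mul_nonpos_of_nonpos_of_nonneg (hPQ x (hx hxI)).le (sq_nonneg _)
  have hV := bddBelow_range_laneEmdenPotential hp hodd hδ r
  refine ⟨hH', hanti, hV, fun x hxI => ?_⟩
  change _ ≤ 2 * (_ - sInf (range (laneEmdenPotential p δ r)))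
  have hHx : perturbedH p δ r P u x ≤ perturbedH p δ r P u x₀ :=
    hanti ⟨le_rfl, hxI.1.trans_lt hxI.2⟩ hxI hxI.1
  have hVx : sInf (range (laneEmdenPotential p δ r)) ≤ laneEmdenPotential p δ r (u x) :=
    csInf_le hV (mem_range_self _)
  simp only [perturbedH_eq] at hHx ⊢
  linarith

/-- For the perturbed Lane–Emden equation with constant coefficient function
`R(x) = r`, odd `p`, `δ > 0`, `P > 0` and `P'/2 - Q < 0` on `(0,1)`: along a twice
differentiable solution on `[x₀, x₁) ⊆ (0,1)` the Lyapunov function `H` satisfies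
`H' = (P'/2 - Q) u'²`, `H` is nonincreasing, the potential infimum `V` is finite, and
`P(x) u'(x)² ≤ 2(H(x₀) - V)`. -/
theorem perturbedLaneEmden_lyapunov_bound
    (p : ℕ) (hp : 1 < p) (α δ r : ℝ) (hα : 0 < α) (hδ : 0 < δ)
    (hodd : Odd p)
    (n : ℕ) (a b c : ℤ → ℝ)
    (hc1 : c (-1) = 0) (hc0 : c 0 = r) (hck : ∀ k : ℤ, 1 ≤ k → c k = 0)
    (P Q : ℝ → ℝ)
    (hP : P = fun x : ℝ => 1 + ∑ k ∈ Finset.Icc (-1 : ℤ) (n : ℤ), a k * x ^ (k + 2))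
    (hQ : Q = fun x : ℝ => α / x + ∑ k ∈ Finset.Icc (-1 : ℤ) (n : ℤ), b k * x ^ (k + 1))
    (hPpos : ∀ x ∈ Ioo (0 : ℝ) 1, 0 < P x)
    (hPQ : ∀ x ∈ Ioo (0 : ℝ) 1, deriv P x / 2 - Q x < 0)
    (x₀ x₁ : ℝ) (hx : Ico x₀ x₁ ⊆ Ioo (0 : ℝ) 1)
    (u : ℝ → ℝ)
    (hdiff : ∀ x ∈ Ico x₀ x₁, DifferentiableAt ℝ u x)
    (hdiff2 : ∀ x ∈ Ico x₀ x₁, DifferentiableAt ℝ (deriv u) x)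
    (heq : ∀ x ∈ Ico x₀ x₁,
      P x * deriv (deriv u) x + Q x * deriv u x
        + (∑ k ∈ Finset.Icc (-1 : ℤ) (n : ℤ), c k * x ^ k) * u x
        + δ * u x ^ p = 0) :
    (∀ x ∈ Ico x₀ x₁,
      HasDerivAt (perturbedH p δ r P u)
        ((deriv P x / 2 - Q x) * (deriv u x) ^ 2) x) ∧
    AntitoneOn (perturbedH p δ r P u) (Ico x₀ x₁) ∧
    BddBelow (Set.range fun w : ℝ => δ / ((p : ℝ) + 1) * w ^ (p + 1) + r / 2 * w ^ 2) ∧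
    ∀ x ∈ Ico x₀ x₁,
      P x * (deriv u x) ^ 2
        ≤ 2 * (perturbedH p δ r P u x₀
            - sInf (Set.range fun w : ℝ =>
                δ / ((p : ℝ) + 1) * w ^ (p + 1) + r / 2 * w ^ 2)) :=
  perturbedLaneEmden_lyapunov_bound_general p hp δ r hδ hodd n a c hc1 hc0 hck P Q hP hPQ x₀ x₁ hx u
    hdiff hdiff2 heq
end
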